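/- arXiv:math/0605306 — 3 statements merged into one kernel-verified Lean document; each statement's English description precedes it below -/
import Mathlib

section
/- Let ρ be a normalized near weight on R and let f, g ∈ R \ {0} with ρ(f) > 0 and ρ(g) = 0. Then there exists λ ∈ F such that ρ(f·(g − λ·1)) < ρ(f). -/
structure NearWeight (F R : Type*) [Field F] [CommRing R] [Algebra F R] where
  w : R → WithBot ℕ
  N0 : ∀ f : R, w f = ⊥ ↔ f = 0
  N1 : ∀ (c : F) (f : R), c ≠ 0 → w (c • f) = w f
  N2 : ∀ f g : R, w (f + g) ≤ max (w f) (w g)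
  N3 : ∀ f g h : R, w f < w g → w (f * h) ≤ w (g * h)
  N3' : ∀ f g h : R, w f < w g → w 1 < w h → w (f * h) < w (g * h)
  N4 : ∀ f g : R, w 1 < w f → w 1 < w g → w f = w g →
      ∃ c : F, c ≠ 0 ∧ w (f - c • g) < w f
  N5 : ∀ f g : R, w (f * g) ≤ w f + w g
  N5' : ∀ f g : R, w 1 < w f → w 1 < w g → w (f * g) = w f + w g
  norm0 : ∀ f : R, f ≠ 0 → w f ≤ w 1 → w f = 0
  normgcd : ∀ d : ℕ, (∀ f : R, w 1 < w f → ∃ k : ℕ, w f = ((d * k : ℕ) : WithBot ℕ)) → d = 1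

namespace NearWeight

variable {F R : Type*} [Field F] [CommRing R] [Algebra F R]

def U (ρ : NearWeight F R) : Set R := {r | ρ.w r ≤ ρ.w 1}

def M (ρ : NearWeight F R) : Set R := {r | ρ.w 1 < ρ.w r}

def nval (ρ : NearWeight F R) (f : R) : ℕ := WithBot.unbotD 0 (ρ.w f)

def Hset (ρ σ : NearWeight F R) (S : Set R) : Set (ℕ × ℕ) :=
  {p | ∃ f ∈ S, f ≠ 0 ∧ (ρ.nval f, σ.nval f) = p}

def WellAgreeing (ρ σ : NearWeight F R) : Prop :=
  (Hset ρ σ Set.univ)ᶜ.Finite ∧ ρ.U ∩ σ.U = Set.range (algebraMap F R)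

noncomputable def xH (ρ σ : NearWeight F R) (n : ℕ) : ℕ :=
  sInf {m | (m, n) ∈ Hset ρ σ Set.univ}

noncomputable def yH (ρ σ : NearWeight F R) (n : ℕ) : ℕ :=
  sInf {m | (n, m) ∈ Hset ρ σ Set.univ}

def lub (a b : ℕ × ℕ) : ℕ × ℕ := (max a.1 b.1, max a.2 b.2)

noncomputable def Gamma (ρ σ : NearWeight F R) : Set (ℕ × ℕ) :=
  {p | ∃ m : ℕ, p = (m, yH ρ σ m)} ∪ {p | ∃ n : ℕ, p = (xH ρ σ n, n)}

def Hbarx (ρ σ : NearWeight F R) : Set ℕ := {m | (m, 0) ∈ Hset ρ σ Set.univ}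

def Hbary (ρ σ : NearWeight F R) : Set ℕ := {n | (0, n) ∈ Hset ρ σ Set.univ}

noncomputable def GammaTilde (ρ σ : NearWeight F R) : Set (ℕ × ℕ) :=
  {p | ∃ m : ℕ, m ∉ Hbarx ρ σ ∧ p = (m, yH ρ σ m)}

def Delta (p : ℕ × ℕ) : Set (ℕ × ℕ) :=
  {q | (q.1 = p.1 ∧ q.2 < p.2) ∨ (q.2 = p.2 ∧ q.1 < p.1)}

noncomputable def tw (ρ : NearWeight F R) (f : R) : ℤ :=
  sInf {z : ℤ | ∃ g ∈ ρ.M, z = (ρ.nval (f * g) : ℤ) - (ρ.nval g : ℤ)}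

end NearWeight

variable {F R : Type*} [Field F] [CommRing R] [Algebra F R]

namespace NearWeight

variable (ρ : NearWeight F R)

theorem ne_zero_of_w_pos {f : R} (hf : 0 < ρ.w f) : f ≠ 0 := by
  rintro rfl
  rw [(ρ.N0 0).mpr rfl] at hf
  exact not_lt_bot hf

theorem w_one [Nontrivial R] : ρ.w 1 = 0 :=
  ρ.norm0 1 one_ne_zero le_rfl

theorem w_mul_le_of_w_eq_zero (f : R) {g : R} (hg : ρ.w g = 0) : ρ.w (f * g) ≤ ρ.w f := by
  simpa [hg] using ρ.N5 f g

end NearWeight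

theorem stmt0_general
    (ρ : NearWeight F R) (f g : R)
    (hρf : 0 < ρ.w f) (hρg : ρ.w g = 0) :
    ∃ c : F, ρ.w (f * (g - c • (1 : R))) < ρ.w f := by
  have : Nontrivial R := ⟨⟨f, 0, ρ.ne_zero_of_w_pos hρf⟩⟩
  have hfM : ρ.w 1 < ρ.w f := by rwa [ρ.w_one]
  rcases (ρ.w_mul_le_of_w_eq_zero f hρg).lt_or_eq with hlt | heq
  · exact ⟨0, by simpa using hlt⟩
  · -- `f * g` and `f` have the same positive weight, so (N4) cancels their leading terms.
    obtain ⟨c, -, hc⟩ := ρ.N4 (f * g) f (heq ▸ hfM) hfM heq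
    refine ⟨c, ?_⟩
    rwa [mul_sub, mul_smul_comm, mul_one, ← heq]

theorem stmt0
    (hinj : Function.Injective (algebraMap F R))
    (hsur : ¬ Function.Surjective (algebraMap F R))
    (ρ : NearWeight F R) (f g : R) (hf : f ≠ 0) (hg : g ≠ 0)
    (hρf : 0 < ρ.w f) (hρg : ρ.w g = 0) :
    ∃ c : F, ρ.w (f * (g - c • (1 : R))) < ρ.w f :=
  stmt0_general ρ f g hρf hρg
end

section
/- Let ρ and σ be two well agreeing near weights on R. Then H = {lub(a, b) : a, b ∈ Γ}. -/
/-!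
`H` is closed under `lub`: if `ρ f < ρ g` but `σ f > σ g`, then `f + g` takes the larger value
in both coordinates, since a sum takes the value of its dominant summand. As `ℕ² \ H` is finite,
every row and every column of `H` is nonempty, so `Γ ⊆ H` and hence all `lub`s of points of `Γ`
lie in `H`. Conversely every `p ∈ H` is `lub (p₁, y_H p₁) (x_H p₂, p₂)`.
-/

lemma WithBot.unbotD_zero_monotone : Monotone (WithBot.unbotD (0 : ℕ)) := by
  intro a b hab
  induction a with
  | bot => exact Nat.zero_le _
  | coe a =>
    induction b with
    | bot => exact absurd hab (by simp)
    | coe b => simpa using hab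

lemma Set.Finite.nonempty_row {s : Set (ℕ × ℕ)} (hs : sᶜ.Finite) (m : ℕ) :
    {k | (m, k) ∈ s}.Nonempty := by
  have := (hs.preimage (Prod.mk_right_injective m).injOn).infinite_compl.nonempty
  rwa [Set.preimage_compl, compl_compl] at this

lemma Set.Finite.nonempty_column {s : Set (ℕ × ℕ)} (hs : sᶜ.Finite) (n : ℕ) :
    {k | (k, n) ∈ s}.Nonempty := by
  have := (hs.preimage (Prod.mk_left_injective n).injOn).infinite_compl.nonempty
  rwa [Set.preimage_compl, compl_compl] at this

namespace NearWeight

variable {F R : Type*} [Field F] [CommRing R] [Algebra F R] (ρ σ : NearWeight F R)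

lemma w_neg (f : R) : ρ.w (-f) = ρ.w f := by
  simpa using ρ.N1 (-1) f (by norm_num)

lemma w_add_of_lt {f g : R} (h : ρ.w f < ρ.w g) : ρ.w (f + g) = ρ.w g := by
  refine le_antisymm ((ρ.N2 f g).trans (max_eq_right h.le).le) (not_lt.mp fun hlt => ?_)
  have := ρ.N2 (f + g) (-f)
  rw [add_neg_cancel_comm, w_neg] at this
  exact this.not_gt (max_lt hlt h)

lemma add_ne_zero_of_w_lt {f g : R} (hg : g ≠ 0) (h : ρ.w f < ρ.w g) : f + g ≠ 0 := by
  intro h0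
  have := ρ.w_add_of_lt h
  rw [h0, (ρ.N0 0).mpr rfl, eq_comm, ρ.N0] at this
  exact hg this

lemma exists_w_eq_max {f g : R} (hf : f ≠ 0) (hg : g ≠ 0) :
    ∃ h : R, h ≠ 0 ∧ ρ.w h = max (ρ.w f) (ρ.w g) ∧ σ.w h = max (σ.w f) (σ.w g) := by
  wlog hρ : ρ.w f ≤ ρ.w g generalizing f g
  · obtain ⟨h, hh, h₁, h₂⟩ := this hg hf (not_le.mp hρ).le
    exact ⟨h, hh, max_comm (ρ.w f) _ ▸ h₁, max_comm (σ.w f) _ ▸ h₂⟩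
  rcases le_or_gt (σ.w f) (σ.w g) with hσ | hσ
  · exact ⟨g, hg, (max_eq_right hρ).symm, (max_eq_right hσ).symm⟩
  rcases hρ.eq_or_lt with hρ | hρ
  · exact ⟨f, hf, (max_eq_left hρ.ge).symm, (max_eq_left hσ.le).symm⟩
  refine ⟨f + g, ρ.add_ne_zero_of_w_lt hg hρ, ?_, ?_⟩
  · rw [ρ.w_add_of_lt hρ, max_eq_right hρ.le]
  · rw [add_comm, σ.w_add_of_lt hσ, max_eq_left hσ.le]

lemma lub_mem_Hset {a b : ℕ × ℕ} (ha : a ∈ Hset ρ σ Set.univ) (hb : b ∈ Hset ρ σ Set.univ) :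
    lub a b ∈ Hset ρ σ Set.univ := by
  obtain ⟨f, -, hf, rfl⟩ := ha
  obtain ⟨g, -, hg, rfl⟩ := hb
  obtain ⟨h, hh, hρ, hσ⟩ := exists_w_eq_max ρ σ hf hg
  refine ⟨h, Set.mem_univ h, hh, ?_⟩
  simp only [nval, lub, hρ, hσ, WithBot.unbotD_zero_monotone.map_max]

lemma Gamma_subset_Hset (hfin : (Hset ρ σ Set.univ)ᶜ.Finite) :
    Gamma ρ σ ⊆ Hset ρ σ Set.univ := by
  rintro p (⟨m, rfl⟩ | ⟨n, rfl⟩)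
  · exact Nat.sInf_mem (hfin.nonempty_row m)
  · exact Nat.sInf_mem (hfin.nonempty_column n)

lemma lub_yH_xH_eq {p : ℕ × ℕ} (hp : p ∈ Hset ρ σ Set.univ) :
    lub (p.1, yH ρ σ p.1) (xH ρ σ p.2, p.2) = p := by
  have hy : yH ρ σ p.1 ≤ p.2 := Nat.sInf_le hp
  have hx : xH ρ σ p.2 ≤ p.1 := Nat.sInf_le hp
  simp [lub, hx, hy]

end NearWeight

variable {F R : Type*} [Field F] [CommRing R] [Algebra F R]

theorem stmt5_general
    (ρ σ : NearWeight F R) (hwa : NearWeight.WellAgreeing ρ σ) :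
    NearWeight.Hset ρ σ Set.univ =
      {p | ∃ a ∈ NearWeight.Gamma ρ σ, ∃ b ∈ NearWeight.Gamma ρ σ,
        p = NearWeight.lub a b} := by
  ext p
  constructor
  · intro hp
    exact ⟨_, Or.inl ⟨p.1, rfl⟩, _, Or.inr ⟨p.2, rfl⟩, (NearWeight.lub_yH_xH_eq ρ σ hp).symm⟩
  · rintro ⟨a, ha, b, hb, rfl⟩
    have hΓ := NearWeight.Gamma_subset_Hset ρ σ hwa.1
    exact NearWeight.lub_mem_Hset ρ σ (hΓ ha) (hΓ hb)

theorem stmt5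
    (hinj : Function.Injective (algebraMap F R))
    (hsur : ¬ Function.Surjective (algebraMap F R))
    (ρ σ : NearWeight F R) (hwa : NearWeight.WellAgreeing ρ σ) :
    NearWeight.Hset ρ σ Set.univ =
      {p | ∃ a ∈ NearWeight.Gamma ρ σ, ∃ b ∈ NearWeight.Gamma ρ σ,
        p = NearWeight.lub a b} :=
  stmt5_general ρ σ hwa
end

section
/- Let R be a commutative F-algebra admitting two well agreeing near weights ρ and σ. Then R is finitely generated as an F-algebra; more precisely, R = F[{φ_a : a ∈ Γ⁺}] for any choice of elements φ_a ∈ R \ {0} with (ρ(φ_a), σ(φ_a)) = a for each a ∈ Γ⁺. -/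
variable {F R : Type*} [Field F] [CommRing R] [Algebra F R]

/-!
Every `f ∈ R` is reached by induction on `ρ f + σ f`. If both weights vanish, `f` lies in
`U_ρ ∩ U_σ = F`. Otherwise the generators provide `g` in the subalgebra with the same leading
weight as `f` and no larger second weight: products of axis generators when `ρ f ∈ H̄_x` or
`ρ f = 0`, and `φ (ρ f, y_H (ρ f))` otherwise, as `y_H (ρ f) ≤ σ f`. Axiom N4 then gives
`c ∈ F` with `f - c • g` of smaller total weight.
-/

theorem AddSubgroup.mem_of_forall_exists_sub_lt {M : Type*} [AddGroup M] {G : AddSubgroup M}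
    (deg : M → ℕ) (h : ∀ x, x ∈ G ∨ ∃ y ∈ G, deg (x - y) < deg x) (x : M) : x ∈ G := by
  induction hx : deg x using Nat.strong_induction_on generalizing x with
  | _ n ih =>
  rcases h x with hxG | ⟨y, hyG, hlt⟩
  · exact hxG
  · simpa using G.add_mem (ih _ (hx ▸ hlt) (x - y) rfl) hyG

namespace NearWeight

variable {F R : Type*} [Field F] [CommRing R] [Algebra F R]

section SingleWeight

variable (τ : NearWeight F R) {f g : R}

@[simp]
lemma nval_zero : τ.nval 0 = 0 := by
  rw [nval, (τ.N0 0).2 rfl, WithBot.unbotD_bot]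

lemma w_eq_nval (hf : f ≠ 0) : τ.w f = τ.nval f := by
  obtain ⟨n, hn⟩ := WithBot.ne_bot_iff_exists.1 fun h => hf ((τ.N0 f).1 h)
  rw [nval, ← hn, WithBot.unbotD_coe]
  rfl

lemma ne_zero_of_nval_pos (h : 0 < τ.nval f) : f ≠ 0 := by
  rintro rfl
  simp at h

lemma nval_le_nval (h : τ.w f ≤ τ.w g) : τ.nval f ≤ τ.nval g := by
  by_cases hf : f = 0
  · simp [hf]
  · exact WithBot.unbotD_mono (fun h' => hf ((τ.N0 f).1 h')) h

lemma nval_smul_le (c : F) : τ.nval (c • g) ≤ τ.nval g := by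
  by_cases hc : c = 0
  · simp [hc]
  · rw [nval, τ.N1 c g hc, nval]

lemma nval_add_le : τ.nval (f + g) ≤ max (τ.nval f) (τ.nval g) := by
  rcases le_total (τ.w f) (τ.w g) with h | h
  · exact (τ.nval_le_nval ((τ.N2 f g).trans (max_le h le_rfl))).trans (le_max_right _ _)
  · exact (τ.nval_le_nval ((τ.N2 f g).trans (max_le le_rfl h))).trans (le_max_left _ _)

lemma nval_sub_smul_le (c : F) : τ.nval (f - c • g) ≤ max (τ.nval f) (τ.nval g) := by
  rw [sub_eq_add_neg, ← neg_smul]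
  exact (τ.nval_add_le).trans (max_le_max le_rfl (τ.nval_smul_le _))

lemma nval_mul_le : τ.nval (f * g) ≤ τ.nval f + τ.nval g := by
  by_cases hfg : f * g = 0
  · simp [hfg]
  have hf : f ≠ 0 := left_ne_zero_of_mul hfg
  have hg : g ≠ 0 := right_ne_zero_of_mul hfg
  have h := τ.N5 f g
  rw [τ.w_eq_nval hfg, τ.w_eq_nval hf, τ.w_eq_nval hg] at h
  exact_mod_cast h

variable [Nontrivial R]

lemma w_one_s10 : τ.w 1 = 0 :=
  τ.norm0 1 one_ne_zero le_rfl

lemma w_one_lt_of_nval_pos (h : 0 < τ.nval f) : τ.w 1 < τ.w f := by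
  rw [τ.w_one_s10, τ.w_eq_nval (τ.ne_zero_of_nval_pos h)]
  exact_mod_cast h

lemma mem_U_of_nval_eq_zero (h : τ.nval f = 0) : f ∈ τ.U := by
  by_cases hf : f = 0
  · simp [U, hf, (τ.N0 0).2 rfl]
  · simp [U, τ.w_eq_nval hf, h, τ.w_one_s10]

lemma nval_mul_of_pos (hf : 0 < τ.nval f) (hg : 0 < τ.nval g) :
    τ.nval (f * g) = τ.nval f + τ.nval g := by
  have h := τ.N5' f g (τ.w_one_lt_of_nval_pos hf) (τ.w_one_lt_of_nval_pos hg)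
  rw [τ.w_eq_nval (τ.ne_zero_of_nval_pos hf), τ.w_eq_nval (τ.ne_zero_of_nval_pos hg),
    ← Nat.cast_add] at h
  rw [nval, h]
  rfl

lemma exists_nval_sub_smul_lt (hg : 0 < τ.nval g) (hfg : τ.nval f = τ.nval g) :
    ∃ c : F, τ.nval (f - c • g) < τ.nval f := by
  have hf : 0 < τ.nval f := hfg ▸ hg
  obtain ⟨c, -, hc⟩ := τ.N4 f g (τ.w_one_lt_of_nval_pos hf) (τ.w_one_lt_of_nval_pos hg)
    (by rw [τ.w_eq_nval (τ.ne_zero_of_nval_pos hf), τ.w_eq_nval (τ.ne_zero_of_nval_pos hg), hfg])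
  refine ⟨c, ?_⟩
  by_cases h0 : f - c • g = 0
  · simpa [h0] using hf
  · rw [τ.w_eq_nval h0, τ.w_eq_nval (τ.ne_zero_of_nval_pos hf)] at hc
    exact_mod_cast hc

end SingleWeight

lemma swap_mem_Hset {ρ σ : NearWeight F R} {S : Set R} {p : ℕ × ℕ} (h : p ∈ Hset ρ σ S) :
    p.swap ∈ Hset σ ρ S := by
  obtain ⟨f, hfS, hf, rfl⟩ := h
  exact ⟨f, hfS, hf, rfl⟩

def axisSubmonoid [Nontrivial R] (ρ σ : NearWeight F R) (A : Subalgebra F R) :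
    AddSubmonoid ℕ where
  carrier := {m | (m, 0) ∈ Hset ρ σ A}
  zero_mem' := ⟨1, A.one_mem, one_ne_zero, by simp [nval, ρ.w_one_s10, σ.w_one_s10]⟩
  add_mem' := by
    rintro m n ⟨f, hfA, hf, hfmn⟩ ⟨g, hgA, hg, hgmn⟩
    simp only [Prod.mk.injEq] at hfmn hgmn
    rcases Nat.eq_zero_or_pos m with rfl | hm
    · rw [zero_add]
      exact ⟨g, hgA, hg, by rw [hgmn.1, hgmn.2]⟩
    rcases Nat.eq_zero_or_pos n with rfl | hn
    · rw [add_zero]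
      exact ⟨f, hfA, hf, by rw [hfmn.1, hfmn.2]⟩
    have hρ : ρ.nval (f * g) = m + n := by
      rw [ρ.nval_mul_of_pos (hfmn.1 ▸ hm) (hgmn.1 ▸ hn), hfmn.1, hgmn.1]
    refine ⟨f * g, A.mul_mem hfA hgA, ρ.ne_zero_of_nval_pos (by omega), ?_⟩
    have hσ := σ.nval_mul_le (f := f) (g := g)
    simp only [Prod.mk.injEq, hρ, true_and]
    omega

section WellAgreeing

variable [Nontrivial R] {ρ σ : NearWeight F R}

lemma exists_sub_smul_lt_of_leading {f g : R} (hg : 0 < ρ.nval g) (hρ : ρ.nval f = ρ.nval g)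
    (hσ : σ.nval g ≤ σ.nval f) :
    ∃ c : F, ρ.nval (f - c • g) + σ.nval (f - c • g) < ρ.nval f + σ.nval f := by
  obtain ⟨c, hc⟩ := ρ.exists_nval_sub_smul_lt hg hρ
  have := σ.nval_sub_smul_le (f := f) (g := g) c
  exact ⟨c, by omega⟩

lemma exists_mem_leading {A : Subalgebra F R} (hx : Hbarx ρ σ ⊆ axisSubmonoid ρ σ A)
    (hΓ : GammaTilde ρ σ ⊆ Hset ρ σ A) {f : R} (hf : f ≠ 0) :
    ∃ g ∈ A, ρ.nval g = ρ.nval f ∧ σ.nval g ≤ σ.nval f := by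
  by_cases hb : ρ.nval f ∈ Hbarx ρ σ
  · obtain ⟨g, hgA, -, hg⟩ := hx hb
    simp only [Prod.mk.injEq] at hg
    exact ⟨g, hgA, hg.1, hg.2 ▸ Nat.zero_le _⟩
  · obtain ⟨g, hgA, -, hg⟩ := hΓ ⟨_, hb, rfl⟩
    simp only [Prod.mk.injEq] at hg
    exact ⟨g, hgA, hg.1, hg.2 ▸ Nat.sInf_le ⟨f, Set.mem_univ f, hf, rfl⟩⟩

theorem subalgebra_eq_top_of_bidegrees_mem {A : Subalgebra F R}
    (hU : ρ.U ∩ σ.U ⊆ Set.range (algebraMap F R))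
    (hx : Hbarx ρ σ ⊆ axisSubmonoid ρ σ A) (hy : Hbary ρ σ ⊆ axisSubmonoid σ ρ A)
    (hΓ : GammaTilde ρ σ ⊆ Hset ρ σ A) : A = ⊤ := by
  refine eq_top_iff.2 fun f _ => AddSubgroup.mem_of_forall_exists_sub_lt
    (G := A.toSubring.toAddSubgroup) (fun f => ρ.nval f + σ.nval f) (fun f => ?_) f
  by_cases hf : f = 0
  · exact .inl (hf ▸ A.zero_mem)
  rcases Nat.eq_zero_or_pos (ρ.nval f) with hρ | hρ
  · rcases Nat.eq_zero_or_pos (σ.nval f) with hσ | hσ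
    · obtain ⟨c, rfl⟩ := hU ⟨ρ.mem_U_of_nval_eq_zero hρ, σ.mem_U_of_nval_eq_zero hσ⟩
      exact .inl (A.algebraMap_mem c)
    · obtain ⟨g, hgA, -, hg⟩ := hy ⟨f, Set.mem_univ f, hf, by rw [hρ]⟩
      simp only [Prod.mk.injEq] at hg
      obtain ⟨c, hc⟩ :=
        exists_sub_smul_lt_of_leading (ρ := σ) (σ := ρ) (hg.1 ▸ hσ) hg.1.symm (by omega)
      exact .inr ⟨c • g, A.smul_mem hgA c, by omega⟩
  · obtain ⟨g, hgA, hgρ, hgσ⟩ := exists_mem_leading hx hΓ hf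
    obtain ⟨c, hc⟩ := exists_sub_smul_lt_of_leading (hgρ ▸ hρ) hgρ.symm hgσ
    exact .inr ⟨c • g, A.smul_mem hgA c, hc⟩

end WellAgreeing

end NearWeight

theorem stmt10_general
    (ρ σ : NearWeight F R) (hwa : NearWeight.WellAgreeing ρ σ)
    (Mx Ny : Set ℕ)
    (hMx : (AddSubmonoid.closure Mx : Set ℕ) = NearWeight.Hbarx ρ σ)
    (hNy : (AddSubmonoid.closure Ny : Set ℕ) = NearWeight.Hbary ρ σ)
    (Gplus : Set (ℕ × ℕ))
    (hGplus : Gplus = NearWeight.GammaTilde ρ σ ∪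
      ((fun m => (m, (0 : ℕ))) '' Mx) ∪ ((fun n => ((0 : ℕ), n)) '' Ny))
    (φ : ℕ × ℕ → R)
    (hφ : ∀ a ∈ Gplus, φ a ≠ 0 ∧ (ρ.nval (φ a), σ.nval (φ a)) = a) :
    Algebra.adjoin F (φ '' Gplus) = (⊤ : Subalgebra F R) := by
  rcases subsingleton_or_nontrivial R with _ | _
  · exact eq_top_iff.2 fun f _ => Subsingleton.elim f 0 ▸ zero_mem _
  set A := Algebra.adjoin F (φ '' Gplus)
  have hGplusA : Gplus ⊆ NearWeight.Hset ρ σ A := fun a ha =>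
    ⟨φ a, Algebra.subset_adjoin ⟨a, ha, rfl⟩, hφ a ha⟩
  refine NearWeight.subalgebra_eq_top_of_bidegrees_mem hwa.2.subset ?_ ?_ ?_
  · rw [← hMx]
    exact AddSubmonoid.closure_le.2 fun m hm =>
      hGplusA (by rw [hGplus]; exact .inl (.inr ⟨m, hm, rfl⟩))
  · rw [← hNy]
    exact AddSubmonoid.closure_le.2 fun n hn =>
      NearWeight.swap_mem_Hset (p := (0, n)) (hGplusA (by rw [hGplus]; exact .inr ⟨n, hn, rfl⟩))
  · exact fun a ha => hGplusA (by rw [hGplus]; exact .inl (.inl ha))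

theorem stmt10
    (hinj : Function.Injective (algebraMap F R))
    (hsur : ¬ Function.Surjective (algebraMap F R))
    (ρ σ : NearWeight F R) (hwa : NearWeight.WellAgreeing ρ σ)
    (Mx Ny : Set ℕ) (hMxfin : Mx.Finite) (hNyfin : Ny.Finite)
    (hMx : (AddSubmonoid.closure Mx : Set ℕ) = NearWeight.Hbarx ρ σ)
    (hNy : (AddSubmonoid.closure Ny : Set ℕ) = NearWeight.Hbary ρ σ)
    (Gplus : Set (ℕ × ℕ))
    (hGplus : Gplus = NearWeight.GammaTilde ρ σ ∪
      ((fun m => (m, (0 : ℕ))) '' Mx) ∪ ((fun n => ((0 : ℕ), n)) '' Ny))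
    (φ : ℕ × ℕ → R)
    (hφ : ∀ a ∈ Gplus, φ a ≠ 0 ∧ (ρ.nval (φ a), σ.nval (φ a)) = a) :
    Algebra.adjoin F (φ '' Gplus) = (⊤ : Subalgebra F R) :=
  stmt10_general ρ σ hwa Mx Ny hMx hNy Gplus hGplus φ hφ
end
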